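/- Let D be a simple strongly connected digraph on n vertices that is not isomorphic to the complete digraph K_n^↔ and not isomorphic to K→(n,n−2,1). Then q(D) < (3n−5+sqrt(n^2+2n−7))/2. Consequently, K→(n,n−2,1) is the unique digraph achieving the second maximum signless Laplacian spectral radius (3n−5+sqrt(n^2+2n−7))/2 among all strongly connected digraphs on n vertices. -/

import Mathlib

open Matrix

namespace SignlessDigraph

variable {n : ℕ}

/-- Real adjacency matrix of a (multi)digraph on `Fin n`, given by arc multiplicities. -/
def adjMat (W : Fin n → Fin n → ℕ) : Matrix (Fin n) (Fin n) ℝ :=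
  fun i j => (W i j : ℝ)

/-- Outdegree of a vertex. -/
def outdeg (W : Fin n → Fin n → ℕ) (i : Fin n) : ℕ := ∑ j, W i j

/-- Indegree of a vertex. -/
def indeg (W : Fin n → Fin n → ℕ) (i : Fin n) : ℕ := ∑ j, W j i

/-- The signless Laplacian matrix `Q(D) = diag(outdegrees) + A(D)`. -/
noncomputable def Qmat (W : Fin n → Fin n → ℕ) : Matrix (Fin n) (Fin n) ℝ :=
  Matrix.diagonal (fun i => (outdeg W i : ℝ)) + adjMat W

/-- Spectral radius of a real matrix: the maximum modulus of its (complex) eigenvalues. -/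
noncomputable def radius (M : Matrix (Fin n) (Fin n) ℝ) : ℝ :=
  sSup {r : ℝ | ∃ μ ∈ spectrum ℂ (M.map ((↑) : ℝ → ℂ)), r = ‖μ‖}

/-- The signless Laplacian spectral radius `q(D)`. -/
noncomputable def q (W : Fin n → Fin n → ℕ) : ℝ := radius (Qmat W)

/-- The (adjacency) spectral radius `ρ(D)`. -/
noncomputable def rho (W : Fin n → Fin n → ℕ) : ℝ := radius (adjMat W)

/-- A digraph is simple: no loops and no multiple arcs. -/
def Simple (W : Fin n → Fin n → ℕ) : Prop :=
  (∀ i, W i i = 0) ∧ ∀ i j, W i j ≤ 1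

/-- Strong connectivity: every vertex is reachable from every vertex by a directed path. -/
def StronglyConnected (W : Fin n → Fin n → ℕ) : Prop :=
  ∀ i j : Fin n, Relation.ReflTransGen (fun a b => W a b ≠ 0) i j

/-- Isomorphism of digraphs on `Fin n`. -/
def Iso (W W' : Fin n → Fin n → ℕ) : Prop :=
  ∃ e : Fin n ≃ Fin n, ∀ i j, W (e i) (e j) = W' i j

/-- The clique number: maximum size of a set of vertices with all arcs in both directions. -/
noncomputable def cliqueNum (W : Fin n → Fin n → ℕ) : ℕ :=
  sSup {d : ℕ | ∃ s : Finset (Fin n), s.card = d ∧ ∀ i ∈ s, ∀ j ∈ s, i ≠ j → W i j ≠ 0}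

/-- `W` has a directed cycle of length `c`. -/
def HasCycleLen (W : Fin n → Fin n → ℕ) (c : ℕ) : Prop :=
  ∃ (hc : 2 ≤ c) (p : Fin c → Fin n), Function.Injective p ∧
    ∀ i : Fin c, W (p i) (p ⟨((i : ℕ) + 1) % c, Nat.mod_lt _ (by omega)⟩) ≠ 0

/-- The girth: length of a shortest directed cycle. -/
noncomputable def girth (W : Fin n → Fin n → ℕ) : ℕ := sInf {c | HasCycleLen W c}

/-- The complete digraph `K_n^↔`. -/
def Kcomp (n : ℕ) : Fin n → Fin n → ℕ := fun i j => if i = j then 0 else 1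

/-- The directed cycle `C_n^→`, with arcs `i → i+1 (mod n)`. -/
def cyc (n : ℕ) : Fin n → Fin n → ℕ := fun i j => if (j : ℕ) = ((i : ℕ) + 1) % n then 1 else 0

/-- The digraph `B_{n,d}` (for `2 ≤ d ≤ n-1`): a complete digraph on the vertices
`0, …, d-1` together with a directed path `0 → d → d+1 → ⋯ → n-1 → 1`
(the path `u_1 u_2 ⋯ u_{n-d+2}` with `u_1 = 0`, `u_{n-d+2} = 1`,
and internal vertices `d, …, n-1`). -/
def B (n d : ℕ) : Fin n → Fin n → ℕ := fun i j =>
  if i ≠ j ∧ (i : ℕ) < d ∧ (j : ℕ) < d then 1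
  else if (i : ℕ) = 0 ∧ (j : ℕ) = d then 1
  else if d ≤ (i : ℕ) ∧ (j : ℕ) = (i : ℕ) + 1 then 1
  else if (i : ℕ) = n - 1 ∧ (j : ℕ) = 1 then 1
  else 0

/-- `B'_{n,d} = B_{n,d} − (u_{n-d+1}, u_{n-d+2}) + (u_{n-d+1}, u_1)`, i.e. the arc
`n-1 → 1` is replaced by the arc `n-1 → 0`. -/
def B' (n d : ℕ) : Fin n → Fin n → ℕ := fun i j =>
  if (i : ℕ) = n - 1 ∧ (j : ℕ) = 1 then 0
  else if (i : ℕ) = n - 1 ∧ (j : ℕ) = 0 then 1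
  else B n d i j

/-- The digraph `C_{n,g}` (for `2 ≤ g ≤ n-1`): vertices `u_1, …, u_n` are `0, …, n-1`,
with arcs `i → i+1` for `0 ≤ i ≤ n-2` together with the arcs `g-1 → 0` and `n-1 → 0`. -/
def Cng (n g : ℕ) : Fin n → Fin n → ℕ := fun i j =>
  if (j : ℕ) = (i : ℕ) + 1 then 1
  else if ((i : ℕ) = g - 1 ∨ (i : ℕ) = n - 1) ∧ (j : ℕ) = 0 then 1
  else 0

/-- `C'_{n,g} = C_{n,g} − (u_n, u_1) + (u_n, u_g)`, i.e. the arc `n-1 → 0` is replaced by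
the arc `n-1 → g-1`. -/
def Cng' (n g : ℕ) : Fin n → Fin n → ℕ := fun i j =>
  if (i : ℕ) = n - 1 ∧ (j : ℕ) = 0 then 0
  else if (i : ℕ) = n - 1 ∧ (j : ℕ) = g - 1 then 1
  else Cng n g i j

/-- The θ-digraph `θ(a,b,c)` realized on `Fin n` (intended for `n = a + b + c + 2`):
vertex `0` is the common initial vertex of the paths `P_{a+2}`, `P_{b+2}` and terminal
vertex of `P_{c+2}`; vertex `1` is the common terminal vertex of `P_{a+2}`, `P_{b+2}`
and initial vertex of `P_{c+2}`; the internal vertices of the three paths are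
`2, …, a+1`, `a+2, …, a+b+1` and `a+b+2, …, a+b+c+1` respectively. -/
def theta (n a b c : ℕ) : Fin n → Fin n → ℕ := fun i j =>
  if ((a = 0 ∧ (i : ℕ) = 0 ∧ (j : ℕ) = 1) ∨
      (a ≠ 0 ∧ (((i : ℕ) = 0 ∧ (j : ℕ) = 2) ∨
        (2 ≤ (i : ℕ) ∧ (i : ℕ) ≤ a ∧ (j : ℕ) = (i : ℕ) + 1) ∨
        ((i : ℕ) = a + 1 ∧ (j : ℕ) = 1))) ∨
      (b = 0 ∧ (i : ℕ) = 0 ∧ (j : ℕ) = 1) ∨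
      (b ≠ 0 ∧ (((i : ℕ) = 0 ∧ (j : ℕ) = a + 2) ∨
        (a + 2 ≤ (i : ℕ) ∧ (i : ℕ) ≤ a + b ∧ (j : ℕ) = (i : ℕ) + 1) ∨
        ((i : ℕ) = a + b + 1 ∧ (j : ℕ) = 1))) ∨
      (c = 0 ∧ (i : ℕ) = 1 ∧ (j : ℕ) = 0) ∨
      (c ≠ 0 ∧ (((i : ℕ) = 1 ∧ (j : ℕ) = a + b + 2) ∨
        (a + b + 2 ≤ (i : ℕ) ∧ (i : ℕ) ≤ a + b + c ∧ (j : ℕ) = (i : ℕ) + 1) ∨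
        ((i : ℕ) = a + b + c + 1 ∧ (j : ℕ) = 0))))
  then 1 else 0

/-- The digraph `K→(n,k,m)`: the vertex set is partitioned into
`V₁ = {0,…,m-1}`, `S = {m,…,m+k-1}`, `V₂ = {m+k,…,n-1}`; it is the complete digraph
with all arcs from `V₂` to `V₁` removed. -/
def Kdir (n k m : ℕ) : Fin n → Fin n → ℕ := fun i j =>
  if i = j then 0
  else if m + k ≤ (i : ℕ) ∧ (j : ℕ) < m then 0
  else 1

/-- The digraph `D_{uv}` obtained from `D` by deleting the arc `(u,v)`, identifying `u`
with `v` (the merged vertex is `v`; the vertex `u` becomes isolated) and deleting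
multiple arcs (and loops). -/
def contract (W : Fin n → Fin n → ℕ) (u v : Fin n) : Fin n → Fin n → ℕ :=
  fun i j =>
    if i = u ∨ j = u ∨ i = j then 0
    else if i = v then min 1 (W v j + W u j)
    else if j = v then min 1 (W i v + W i u)
    else min 1 (W i j)

/-- The digraph `D^w` obtained from `D` by subdividing the arc `(u,v)` with a new
vertex `w` (realized as the last vertex of `Fin (n+1)`). -/
def subdivide (W : Fin n → Fin n → ℕ) (u v : Fin n) : Fin (n + 1) → Fin (n + 1) → ℕ :=
  fun i j =>
    if hi : (i : ℕ) < n then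
      if hj : (j : ℕ) < n then
        if (⟨(i : ℕ), hi⟩ : Fin n) = u ∧ (⟨(j : ℕ), hj⟩ : Fin n) = v then 0
        else W ⟨(i : ℕ), hi⟩ ⟨(j : ℕ), hj⟩
      else if (⟨(i : ℕ), hi⟩ : Fin n) = u then 1 else 0
    else
      if hj : (j : ℕ) < n then (if (⟨(j : ℕ), hj⟩ : Fin n) = v then 1 else 0)
      else 0


/-!
Let `K_{ab}` be the complete digraph with the arc `(a, b)` removed, so `K→(n,n−2,1) ≅ K_{ab}`.
Its signless Laplacian has a positive left and a nonzero right eigenvector for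
`qSecond n`, which therefore is `q(K_{ab})` by the Collatz–Wielandt bound. A simple digraph
`D ≠ K_n^↔` misses some arc `(a, b)`, so `Q(D) ≤ Q(K_{ab})` entrywise, strictly somewhere if
`D ≇ K_{ab}`; pairing with the positive left eigenvector gives `q(D) ≤ qSecond n`. Equality would
make `|z|`, for an eigenvector `z` of a maximal eigenvalue, an eigenvector of `Q(D)` vanishing at a
vertex; strong connectivity of `D` spreads the zero to all vertices.
-/

open Relation

lemma exists_perm_apply_eq_and_apply_eq {α : Type*} [DecidableEq α] {a b a' b' : α}
    (hab : a ≠ b) (hab' : a' ≠ b') : ∃ e : Equiv.Perm α, e a = a' ∧ e b = b' := by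
  set e₁ := Equiv.swap a a'
  have hb : e₁ b ≠ a' := fun h => hab (e₁.injective ((Equiv.swap_apply_left a a').trans h.symm))
  refine ⟨e₁.trans (Equiv.swap (e₁ b) b'), ?_, Equiv.swap_apply_left _ _⟩
  rw [Equiv.trans_apply, Equiv.swap_apply_left, Equiv.swap_apply_of_ne_of_ne hb.symm hab']

section NonnegMatrix

variable {ι : Type*} [Fintype ι] {A : Matrix ι ι ℝ}

lemma norm_mul_le_mulVec_norm (hA : ∀ i j, 0 ≤ A i j) {μ : ℂ} {z : ι → ℂ}
    (hz : A.map ((↑) : ℝ → ℂ) *ᵥ z = μ • z) (i : ι) :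
    ‖μ‖ * ‖z i‖ ≤ (A *ᵥ fun j => ‖z j‖) i := by
  calc ‖μ‖ * ‖z i‖ = ‖∑ j, (A i j : ℂ) * z j‖ := by
        rw [← norm_mul, ← smul_eq_mul, ← Pi.smul_apply, ← hz]; rfl
    _ ≤ ∑ j, ‖(A i j : ℂ) * z j‖ := norm_sum_le _ _
    _ = (A *ᵥ fun j => ‖z j‖) i := by
        simp [Matrix.mulVec, dotProduct, abs_of_nonneg (hA i _)]

lemma norm_mul_dotProduct_le (hA : ∀ i j, 0 ≤ A i j) {μ : ℂ} {z : ι → ℂ}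
    (hz : A.map ((↑) : ℝ → ℂ) *ᵥ z = μ • z) {y : ι → ℝ} (hy : 0 ≤ y) :
    ‖μ‖ * (y ⬝ᵥ fun j => ‖z j‖) ≤ (y ᵥ* A) ⬝ᵥ fun j => ‖z j‖ := by
  rw [← smul_eq_mul, ← dotProduct_smul, ← dotProduct_mulVec]
  exact dotProduct_le_dotProduct_of_nonneg_left (norm_mul_le_mulVec_norm hA hz) hy

lemma vecMul_dotProduct_le {y v : ι → ℝ} {q : ℝ} (hyA : y ᵥ* A ≤ q • y) (hv : 0 ≤ v) :
    (y ᵥ* A) ⬝ᵥ v ≤ q * (y ⬝ᵥ v) := by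
  rw [← smul_eq_mul, ← smul_dotProduct]
  exact dotProduct_le_dotProduct_of_nonneg_right hyA hv

lemma mul_eq_zero_of_dotProduct_nonpos {u w : ι → ℝ} (hu : 0 ≤ u) (hw : 0 ≤ w)
    (h : u ⬝ᵥ w ≤ 0) (i : ι) : u i * w i = 0 :=
  (Finset.sum_eq_zero_iff_of_nonneg fun j _ => mul_nonneg (hu j) (hw j)).mp
    (h.antisymm (dotProduct_nonneg_of_nonneg hu hw)) i (Finset.mem_univ i)

lemma eq_zero_of_reflTransGen (hA : ∀ i j, 0 ≤ A i j) {v : ι → ℝ} (hv : 0 ≤ v) {c : ℝ}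
    (hAv : A *ᵥ v = c • v) {i j : ι} (hij : ReflTransGen (fun i j => 0 < A i j) i j)
    (hi : v i = 0) : v j = 0 := by
  induction hij with
  | refl => exact hi
  | @tail k l _ hkl ih =>
    have hsum : ∑ m, A k m * v m = 0 := by
      simpa [Matrix.mulVec, dotProduct, ih] using congrFun hAv k
    have := (Finset.sum_eq_zero_iff_of_nonneg fun m _ => mul_nonneg (hA k m) (hv m)).mp hsum l
      (Finset.mem_univ l)
    exact (mul_eq_zero.mp this).resolve_left hkl.ne'

variable [DecidableEq ι]

lemma exists_mulVec_eq_smul_of_mem_spectrum {A : Matrix ι ι ℂ} {μ : ℂ}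
    (hμ : μ ∈ spectrum ℂ A) : ∃ z : ι → ℂ, z ≠ 0 ∧ A *ᵥ z = μ • z := by
  rw [← Matrix.spectrum_toLin', ← Module.End.hasEigenvalue_iff_mem_spectrum] at hμ
  obtain ⟨z, hz, hz0⟩ := hμ.exists_hasEigenvector
  exact ⟨z, hz0, by simpa using Module.End.mem_eigenspace_iff.mp hz⟩

lemma ofReal_mem_spectrum_of_mulVec_eq_smul {r : ℝ} {x : ι → ℝ}
    (hx : x ≠ 0) (hAx : A *ᵥ x = r • x) :
    (r : ℂ) ∈ spectrum ℂ (A.map ((↑) : ℝ → ℂ)) := by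
  rw [← Matrix.spectrum_toLin']
  refine Module.End.HasEigenvalue.mem_spectrum
    (Module.End.hasEigenvalue_of_hasEigenvector (x := fun i => (x i : ℂ)) ⟨?_, ?_⟩)
  · rw [Module.End.mem_eigenspace_iff, Matrix.toLin'_apply]
    ext i
    have := congrFun hAx i
    simp only [Matrix.mulVec, dotProduct, Matrix.map_apply, Pi.smul_apply, smul_eq_mul] at this ⊢
    exact_mod_cast this
  · intro h
    exact hx (funext fun i => by simpa using congrFun h i)

theorem norm_le_of_vecMul_le (hA : ∀ i j, 0 ≤ A i j) {y : ι → ℝ} (hy : ∀ i, 0 < y i) {q : ℝ}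
    (hyA : y ᵥ* A ≤ q • y) {μ : ℂ} (hμ : μ ∈ spectrum ℂ (A.map ((↑) : ℝ → ℂ))) : ‖μ‖ ≤ q := by
  obtain ⟨z, hz0, hz⟩ := exists_mulVec_eq_smul_of_mem_spectrum hμ
  set v : ι → ℝ := fun j => ‖z j‖
  have hv : 0 ≤ v := fun j => norm_nonneg _
  obtain ⟨i, hi⟩ := Function.ne_iff.mp hz0
  have hyv : 0 < y ⬝ᵥ v := Finset.sum_pos' (fun j _ => mul_nonneg (hy j).le (hv j))
    ⟨i, Finset.mem_univ i, mul_pos (hy i) (norm_pos_iff.mpr hi)⟩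
  exact le_of_mul_le_mul_right
    ((norm_mul_dotProduct_le hA hz fun i => (hy i).le).trans (vecMul_dotProduct_le hyA hv)) hyv

theorem norm_lt_of_vecMul_lt (hA : ∀ i j, 0 ≤ A i j)
    (hirr : ∀ i j, ReflTransGen (fun i j => 0 < A i j) i j) {y : ι → ℝ} (hy : ∀ i, 0 < y i)
    {q : ℝ} (hyA : y ᵥ* A < q • y) {μ : ℂ} (hμ : μ ∈ spectrum ℂ (A.map ((↑) : ℝ → ℂ))) :
    ‖μ‖ < q := by
  obtain ⟨z, hz0, hz⟩ := exists_mulVec_eq_smul_of_mem_spectrum hμ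
  set v : ι → ℝ := fun j => ‖z j‖
  have hv : 0 ≤ v := fun j => norm_nonneg _
  obtain ⟨hle, j, hj⟩ := Pi.lt_def.mp hyA
  by_contra! hqμ
  -- The chain `‖μ‖ (y ⬝ v) ≤ (y A) ⬝ v ≤ q (y ⬝ v) ≤ ‖μ‖ (y ⬝ v)` is tight: `v` is an
  -- eigenvector of `A` and vanishes where `y A < q y`.
  have hμv := norm_mul_dotProduct_le hA hz fun i => (hy i).le
  have hyAv := vecMul_dotProduct_le hle hv
  have hqv : q * (y ⬝ᵥ v) ≤ ‖μ‖ * (y ⬝ᵥ v) :=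
    mul_le_mul_of_nonneg_right hqμ (dotProduct_nonneg_of_nonneg (fun i => (hy i).le) hv)
  have hAv : A *ᵥ v = ‖μ‖ • v := by
    have h := mul_eq_zero_of_dotProduct_nonpos (fun i => (hy i).le)
      (w := A *ᵥ v - ‖μ‖ • v) (sub_nonneg.mpr (norm_mul_le_mulVec_norm hA hz)) (by
        rw [dotProduct_sub, dotProduct_mulVec, dotProduct_smul, smul_eq_mul]
        linarith)
    exact funext fun i => sub_eq_zero.mp ((mul_eq_zero.mp (h i)).resolve_left (hy i).ne')
  have hvj : v j = 0 := by
    have h := mul_eq_zero_of_dotProduct_nonpos (sub_nonneg.mpr hle) hv (by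
      rw [sub_dotProduct, smul_dotProduct, smul_eq_mul]
      linarith)
    exact (mul_eq_zero.mp (h j)).resolve_left (sub_pos.mpr hj).ne'
  exact hz0 (funext fun k => norm_eq_zero.mp (eq_zero_of_reflTransGen hA hv hAv (hirr j k) hvj))

end NonnegMatrix
section Radius

variable {M : Matrix (Fin n) (Fin n) ℝ} {r : ℝ}

lemma radius_eq_sSup_image :
    radius M = sSup ((‖·‖) '' spectrum ℂ (M.map ((↑) : ℝ → ℂ))) := by
  simp only [radius, Set.image, eq_comm]

lemma radius_le (hr : 0 ≤ r) (h : ∀ μ ∈ spectrum ℂ (M.map ((↑) : ℝ → ℂ)), ‖μ‖ ≤ r) :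
    radius M ≤ r := by
  rw [radius_eq_sSup_image]
  exact Real.sSup_le (Set.forall_mem_image.mpr h) hr

lemma radius_lt (hr : 0 < r) (h : ∀ μ ∈ spectrum ℂ (M.map ((↑) : ℝ → ℂ)), ‖μ‖ < r) :
    radius M < r := by
  rw [radius_eq_sSup_image]
  rcases Set.eq_empty_or_nonempty ((‖·‖) '' spectrum ℂ (M.map ((↑) : ℝ → ℂ))) with he | hne
  · rwa [he, Real.sSup_empty]
  · exact (((Matrix.finite_spectrum _).image _).csSup_lt_iff hne).mpr
      (Set.forall_mem_image.mpr h)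

lemma radius_eq (hr : 0 ≤ r) (h : ∀ μ ∈ spectrum ℂ (M.map ((↑) : ℝ → ℂ)), ‖μ‖ ≤ r)
    (hmem : (r : ℂ) ∈ spectrum ℂ (M.map ((↑) : ℝ → ℂ))) : radius M = r := by
  refine (radius_le hr h).antisymm ?_
  rw [radius_eq_sSup_image]
  refine le_csSup ⟨r, Set.forall_mem_image.mpr h⟩ ⟨r, hmem, ?_⟩
  simp [abs_of_nonneg hr]

end Radius

section Qmat

variable {W W' : Fin n → Fin n → ℕ}

lemma Qmat_apply (W : Fin n → Fin n → ℕ) (i j : Fin n) :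
    Qmat W i j = (if i = j then (outdeg W i : ℝ) else 0) + W i j := by
  simp [Qmat, adjMat, diagonal_apply]

lemma cast_le_Qmat_apply (W : Fin n → Fin n → ℕ) (i j : Fin n) : (W i j : ℝ) ≤ Qmat W i j := by
  rw [Qmat_apply]
  split_ifs <;> simp

lemma Qmat_nonneg (W : Fin n → Fin n → ℕ) (i j : Fin n) : 0 ≤ Qmat W i j :=
  (Nat.cast_nonneg _).trans (cast_le_Qmat_apply W i j)

lemma outdeg_mono (h : W ≤ W') (i : Fin n) : outdeg W i ≤ outdeg W' i :=
  Finset.sum_le_sum fun j _ => h i j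

lemma diagonal_outdeg_le (h : W ≤ W') (i j : Fin n) :
    diagonal (fun i => (outdeg W i : ℝ)) i j ≤ diagonal (fun i => (outdeg W' i : ℝ)) i j := by
  simp only [diagonal_apply]
  split_ifs
  · exact_mod_cast outdeg_mono h i
  · rfl

lemma Qmat_le_Qmat (h : W ≤ W') (i j : Fin n) : Qmat W i j ≤ Qmat W' i j :=
  add_le_add (diagonal_outdeg_le h i j) (Nat.cast_le.mpr (h i j))

lemma Qmat_lt_Qmat (h : W ≤ W') {i j : Fin n} (hij : W i j < W' i j) :
    Qmat W i j < Qmat W' i j :=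
  add_lt_add_of_le_of_lt (diagonal_outdeg_le h i j) (Nat.cast_lt.mpr hij)

lemma vecMul_Qmat_lt_vecMul_Qmat (h : W < W') {y : Fin n → ℝ} (hy : ∀ i, 0 < y i) :
    y ᵥ* Qmat W < y ᵥ* Qmat W' := by
  obtain ⟨hle, i, hi⟩ := Pi.lt_def.mp h
  obtain ⟨-, j, hij⟩ := Pi.lt_def.mp hi
  have hmul (k l : Fin n) : y l * Qmat W l k ≤ y l * Qmat W' l k :=
    mul_le_mul_of_nonneg_left (Qmat_le_Qmat hle l k) (hy l).le
  refine Pi.lt_def.mpr ⟨fun k => ?_, j, ?_⟩ <;> simp only [vecMul, dotProduct]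
  · exact Finset.sum_le_sum fun l _ => hmul k l
  · exact Finset.sum_lt_sum (fun l _ => hmul j l)
      ⟨i, Finset.mem_univ i, mul_lt_mul_of_pos_left (Qmat_lt_Qmat hle hij) (hy i)⟩

lemma StronglyConnected.reflTransGen_Qmat_pos (h : StronglyConnected W) (i j : Fin n) :
    ReflTransGen (fun i j => 0 < Qmat W i j) i j :=
  ReflTransGen.mono (fun k l hkl =>
    (Nat.cast_pos.mpr (Nat.pos_of_ne_zero hkl)).trans_le (cast_le_Qmat_apply W k l)) i j (h i j)

end Qmat

def KcompDelete (a b : Fin n) : Fin n → Fin n → ℕ := fun i j =>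
  if i = j ∨ (i = a ∧ j = b) then 0 else 1

noncomputable def qSecond (n : ℕ) : ℝ :=
  (3 * (n : ℝ) - 5 + Real.sqrt ((n : ℝ) ^ 2 + 2 * (n : ℝ) - 7)) / 2

section qSecond

variable (hn : 2 ≤ n)
include hn

lemma qSecond_sq : qSecond n ^ 2 = (3 * n - 5) * qSecond n - 2 * (n - 2) ^ 2 := by
  have hn' : (2 : ℝ) ≤ n := by exact_mod_cast hn
  have hs := Real.sq_sqrt (show (0 : ℝ) ≤ n ^ 2 + 2 * n - 7 by nlinarith)
  unfold qSecond
  linear_combination hs / 4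

lemma two_mul_sub_four_lt_qSecond : 2 * (n : ℝ) - 4 < qSecond n := by
  have hn' : (2 : ℝ) ≤ n := by exact_mod_cast hn
  have hs := Real.sq_sqrt (show (0 : ℝ) ≤ n ^ 2 + 2 * n - 7 by nlinarith)
  have := Real.sqrt_nonneg ((n : ℝ) ^ 2 + 2 * n - 7)
  unfold qSecond
  nlinarith

lemma qSecond_pos : 0 < qSecond n := by
  have hn' : (2 : ℝ) ≤ n := by exact_mod_cast hn
  linarith [two_mul_sub_four_lt_qSecond hn]

end qSecond

section KcompDelete

variable {a b : Fin n}

lemma cast_KcompDelete (hab : a ≠ b) (i j : Fin n) :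
    (KcompDelete a b i j : ℝ) =
      1 - (if i = j then 1 else 0) - (if i = a then 1 else 0) * (if j = b then 1 else 0) := by
  unfold KcompDelete
  by_cases hij : i = j <;> by_cases hia : i = a <;> by_cases hjb : j = b <;> simp_all

lemma cast_outdeg_KcompDelete (hab : a ≠ b) (i : Fin n) :
    (outdeg (KcompDelete a b) i : ℝ) = n - 1 - if i = a then 1 else 0 := by
  simp [outdeg, cast_KcompDelete hab, Finset.sum_sub_distrib]

lemma Qmat_KcompDelete_apply (hab : a ≠ b) (i j : Fin n) :
    Qmat (KcompDelete a b) i j = 1 + (n - 2) * (if i = j then 1 else 0)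
      - (if i = a then 1 else 0) * ((if j = a then 1 else 0) + (if j = b then 1 else 0)) := by
  rw [Qmat_apply, cast_KcompDelete hab]
  split_ifs <;> simp_all [cast_outdeg_KcompDelete hab] <;> ring

lemma Qmat_KcompDelete_mulVec_apply (hab : a ≠ b) (x : Fin n → ℝ) (i : Fin n) :
    (Qmat (KcompDelete a b) *ᵥ x) i =
      ∑ j, x j + (n - 2) * x i - if i = a then x a + x b else 0 := by
  simp only [mulVec, dotProduct, Qmat_KcompDelete_apply hab, mul_ite, mul_one, mul_zero, mul_add,
    sub_mul, add_mul, one_mul, ite_mul, zero_mul, Finset.sum_sub_distrib, Finset.sum_add_distrib,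
    Finset.sum_ite_eq, Finset.mem_univ, ↓reduceIte, Finset.sum_ite_eq', sub_right_inj]
  split_ifs <;> simp

lemma vecMul_Qmat_KcompDelete_apply (hab : a ≠ b) (y : Fin n → ℝ) (j : Fin n) :
    (y ᵥ* Qmat (KcompDelete a b)) j =
      ∑ i, y i + (n - 2) * y j - if j = a ∨ j = b then y a else 0 := by
  simp only [vecMul, dotProduct, Qmat_KcompDelete_apply hab, mul_ite, mul_one, mul_zero, mul_add,
    mul_sub, Finset.sum_sub_distrib, Finset.sum_add_distrib, Finset.sum_ite_eq', Finset.mem_univ,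
    ↓reduceIte, Finset.sum_ite_irrel, Finset.sum_const_zero, sub_mul]
  by_cases hja : j = a <;> by_cases hjb : j = b <;> simp_all <;> ring

/- Both eigenvectors are lifted from `2 × 2` quotient matrices (of the partitions `{a} ∪ rest`
and `{a, b} ∪ rest`), whose characteristic polynomial `t² - (3n - 5) t + 2 (n - 2)²` has largest
root `qSecond n`. -/

lemma exists_mulVec_Qmat_KcompDelete_eq_smul (hab : a ≠ b) :
    ∃ x : Fin n → ℝ, x ≠ 0 ∧ Qmat (KcompDelete a b) *ᵥ x = qSecond n • x := by
  have hq := qSecond_sq (Fin.nontrivial_iff_two_le.mp ⟨a, b, hab⟩)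
  set c := qSecond n - 2 * n + 2
  refine ⟨fun j => 1 + if j = a then c else 0, Function.ne_iff.mpr ⟨b, by simp [hab.symm]⟩, ?_⟩
  ext i
  rw [Qmat_KcompDelete_mulVec_apply hab]
  by_cases hia : i = a
  · subst hia
    simp only [Finset.sum_add_distrib, Finset.sum_const, Finset.card_univ, Fintype.card_fin,
      nsmul_eq_mul, mul_one, Finset.sum_ite_eq', Finset.mem_univ, ↓reduceIte, hab.symm, add_zero,
      Pi.smul_apply, smul_eq_mul, c]
    linear_combination -hq
  · simp only [Finset.sum_add_distrib, Finset.sum_const, Finset.card_univ, Fintype.card_fin,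
      nsmul_eq_mul, mul_one, Finset.sum_ite_eq', Finset.mem_univ, ↓reduceIte, hia, add_zero,
      sub_zero, Pi.smul_apply, smul_eq_mul, c]
    ring

lemma exists_pos_vecMul_Qmat_KcompDelete_eq_smul (hab : a ≠ b) :
    ∃ y : Fin n → ℝ, (∀ i, 0 < y i) ∧ y ᵥ* Qmat (KcompDelete a b) = qSecond n • y := by
  have hn := Fin.nontrivial_iff_two_le.mp ⟨a, b, hab⟩
  have hq := qSecond_sq hn
  have hlt := two_mul_sub_four_lt_qSecond hn
  set c := qSecond n - 2 * n + 2
  refine ⟨fun j => 2 + (if j = a then c else 0) + if j = b then c else 0, fun i => ?_, ?_⟩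
  · have : (2 : ℝ) ≤ n := by exact_mod_cast hn
    dsimp only
    split_ifs <;> simp_all <;> linarith
  ext j
  rw [vecMul_Qmat_KcompDelete_apply hab]
  by_cases hja : j = a
  · subst hja
    simp only [Finset.sum_add_distrib, Finset.sum_const, Finset.card_univ, Fintype.card_fin,
      nsmul_eq_mul, Finset.sum_ite_eq', Finset.mem_univ, ↓reduceIte, hab, add_zero, or_false,
      Pi.smul_apply, smul_eq_mul, c]
    linear_combination -hq
  by_cases hjb : j = b
  · subst hjb
    simp only [Finset.sum_add_distrib, Finset.sum_const, Finset.card_univ, Fintype.card_fin,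
      nsmul_eq_mul, Finset.sum_ite_eq', Finset.mem_univ, ↓reduceIte, hja, add_zero, or_true, hab,
      Pi.smul_apply, smul_eq_mul, c]
    linear_combination -hq
  · simp only [Finset.sum_add_distrib, Finset.sum_const, Finset.card_univ, Fintype.card_fin,
      nsmul_eq_mul, Finset.sum_ite_eq', Finset.mem_univ, ↓reduceIte, hja, add_zero, hjb, or_self,
      sub_zero, Pi.smul_apply, smul_eq_mul, c]
    ring

lemma q_KcompDelete (hab : a ≠ b) : q (KcompDelete a b) = qSecond n := by
  obtain ⟨x, hx, hQx⟩ := exists_mulVec_Qmat_KcompDelete_eq_smul hab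
  obtain ⟨y, hy, hyQ⟩ := exists_pos_vecMul_Qmat_KcompDelete_eq_smul hab
  exact radius_eq (qSecond_pos (Fin.nontrivial_iff_two_le.mp ⟨a, b, hab⟩)).le
    (fun μ hμ => norm_le_of_vecMul_le (Qmat_nonneg _) hy hyQ.le hμ)
    (ofReal_mem_spectrum_of_mulVec_eq_smul hx hQx)

lemma q_lt_qSecond {W : Fin n → Fin n → ℕ} (hsc : StronglyConnected W) (hab : a ≠ b)
    (hW : W < KcompDelete a b) : q W < qSecond n := by
  obtain ⟨y, hy, hyQ⟩ := exists_pos_vecMul_Qmat_KcompDelete_eq_smul hab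
  exact radius_lt (qSecond_pos (Fin.nontrivial_iff_two_le.mp ⟨a, b, hab⟩)) fun μ hμ =>
    norm_lt_of_vecMul_lt (Qmat_nonneg W) hsc.reflTransGen_Qmat_pos hy
      ((vecMul_Qmat_lt_vecMul_Qmat hW hy).trans_eq hyQ) hμ

lemma Kdir_eq_KcompDelete (hn : 2 ≤ n) :
    Kdir n (n - 2) 1 = KcompDelete ⟨n - 1, by omega⟩ ⟨0, by omega⟩ := by
  ext i j
  simp only [Kdir, KcompDelete, Fin.ext_iff]
  have := i.isLt
  split_ifs <;> omega

lemma iso_KcompDelete {a' b' : Fin n} (hab : a ≠ b) (hab' : a' ≠ b') :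
    Iso (KcompDelete a b) (KcompDelete a' b') := by
  obtain ⟨e, ha, hb⟩ := exists_perm_apply_eq_and_apply_eq hab' hab
  refine ⟨e, fun i j => ?_⟩
  simp only [KcompDelete, ← ha, ← hb, e.injective.eq_iff]

lemma Simple.le_KcompDelete {W : Fin n → Fin n → ℕ} (hW : Simple W) (hab : W a b = 0) :
    W ≤ KcompDelete a b := by
  intro i j
  unfold KcompDelete
  split_ifs with h
  · rcases h with rfl | ⟨rfl, rfl⟩
    exacts [(hW.1 i).le, hab.le]
  · exact hW.2 i j

end KcompDelete

lemma Simple.exists_eq_zero_of_not_iso_Kcomp {W : Fin n → Fin n → ℕ} (hW : Simple W)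
    (hK : ¬ Iso W (Kcomp n)) : ∃ a b, a ≠ b ∧ W a b = 0 := by
  by_contra! h
  refine hK ⟨Equiv.refl _, fun i j => ?_⟩
  simp only [Equiv.refl_apply, Kcomp]
  split_ifs with hij
  · exact hij ▸ hW.1 i
  · have := hW.2 i j
    have := h i j hij
    omega

/-- Every simple strongly connected digraph `D` on `n` vertices not
isomorphic to `K_n^↔` nor to `K→(n,n-2,1)` satisfies
`q(D) < (3n-5+√(n²+2n-7))/2`; consequently `K→(n,n-2,1)` is the unique digraph with the
second maximum signless Laplacian spectral radius `(3n-5+√(n²+2n-7))/2` among all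
strongly connected digraphs on `n` vertices. -/
theorem q_second_max {n : ℕ} (hn : 2 ≤ n) (W : Fin n → Fin n → ℕ) (hW : Simple W)
    (hsc : StronglyConnected W) (hK : ¬ Iso W (Kcomp n))
    (hK2 : ¬ Iso W (Kdir n (n - 2) 1)) :
    q W < (3 * (n : ℝ) - 5 + Real.sqrt ((n : ℝ) ^ 2 + 2 * (n : ℝ) - 7)) / 2 ∧
    q (Kdir n (n - 2) 1) =
      (3 * (n : ℝ) - 5 + Real.sqrt ((n : ℝ) ^ 2 + 2 * (n : ℝ) - 7)) / 2 := by
  have hlast : (⟨n - 1, by omega⟩ : Fin n) ≠ ⟨0, by omega⟩ := by simp [Fin.ext_iff]; omega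
  rw [Kdir_eq_KcompDelete hn] at hK2 ⊢
  refine ⟨?_, q_KcompDelete hlast⟩
  obtain ⟨a, b, hab, hWab⟩ := hW.exists_eq_zero_of_not_iso_Kcomp hK
  refine q_lt_qSecond hsc hab (lt_of_le_of_ne (hW.le_KcompDelete hWab) ?_)
  rintro rfl
  exact hK2 (iso_KcompDelete hab hlast)

end SignlessDigraph
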